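/- arXiv:1309.4648 — 3 statements merged into one kernel-verified Lean document; each statement's English description precedes it below -/
import Mathlib

section
/- For all real numbers $\lambda > 0$, $t > 0$ and all $\kappa \in [0,1]$ it holds that $\left| \int_0^t \left( e^{-\lambda u} - e^{-\lambda t/2} \right) du \right| \le t\,(t\lambda)^{\kappa}$. -/
/-! On `[0, t]` the integrand is bounded both by `1` (both exponentials lie in `(0, 1]`) and by
`t λ` (`x ↦ exp (-x)` is `1`-Lipschitz on `[0, ∞)`), so the integral is at most `t · min 1 (t λ)`,
and `min 1 x ≤ x ^ κ` for `x ≥ 0` and `κ ∈ [0, 1]`. -/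

open Real Set

lemma exp_neg_sub_exp_neg_le_sub {a b : ℝ} (ha : 0 ≤ a) (hab : a ≤ b) :
    exp (-a) - exp (-b) ≤ b - a := by
  have h_exp_a : exp (-a) ≤ 1 := exp_le_one_iff.mpr (by linarith)
  have h_exp_ba : exp (-(b - a)) ≤ 1 := exp_le_one_iff.mpr (by linarith)
  have h_tangent : 1 - exp (-(b - a)) ≤ b - a := by linarith [add_one_le_exp (-(b - a))]
  have h_split : exp (-b) = exp (-a) * exp (-(b - a)) := by rw [← exp_add]; ring_nf
  rw [h_split]
  nlinarith [exp_pos (-a)]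

lemma abs_exp_neg_sub_exp_neg_le_abs_sub {a b : ℝ} (ha : 0 ≤ a) (hb : 0 ≤ b) :
    |exp (-a) - exp (-b)| ≤ |a - b| := by
  wlog hab : a ≤ b generalizing a b
  · rw [abs_sub_comm, abs_sub_comm a]
    exact this hb ha (le_of_not_ge hab)
  rw [abs_of_nonneg (sub_nonneg.mpr (exp_le_exp.mpr (neg_le_neg hab))),
    abs_of_nonpos (sub_nonpos.mpr hab), neg_sub]
  exact exp_neg_sub_exp_neg_le_sub ha hab

lemma abs_exp_neg_sub_exp_neg_le_one {a b : ℝ} (ha : 0 ≤ a) (hb : 0 ≤ b) :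
    |exp (-a) - exp (-b)| ≤ 1 :=
  abs_sub_le_of_nonneg_of_le (exp_pos _).le (exp_le_one_iff.mpr (by linarith))
    (exp_pos _).le (exp_le_one_iff.mpr (by linarith))

lemma min_one_le_rpow {x κ : ℝ} (hx : 0 ≤ x) (hκ0 : 0 ≤ κ) (hκ1 : κ ≤ 1) :
    min 1 x ≤ x ^ κ := by
  rcases le_total x 1 with hx1 | hx1
  · calc min 1 x ≤ x := min_le_right _ _
      _ = x ^ (1 : ℝ) := (rpow_one x).symm
      _ ≤ x ^ κ := rpow_le_rpow_of_exponent_ge' hx hx1 hκ0 hκ1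
  · exact (min_le_left _ _).trans (one_le_rpow hx1 hκ0)

theorem stmt_3 (lam t κ : ℝ) (hlam : 0 < lam) (ht : 0 < t)
    (hκ0 : 0 ≤ κ) (hκ1 : κ ≤ 1) :
    |∫ u in (0:ℝ)..t, (Real.exp (-(lam * u)) - Real.exp (-(lam * t / 2)))| ≤
      t * (t * lam) ^ κ := by
  have h_integrand : ∀ u ∈ uIoc 0 t,
      ‖exp (-(lam * u)) - exp (-(lam * t / 2))‖ ≤ min 1 (t * lam) := by
    intro u hu
    rw [uIoc_of_le ht.le] at hu
    have hu0 : 0 ≤ lam * u := mul_nonneg hlam.le hu.1.le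
    have hmid : 0 ≤ lam * t / 2 := by positivity
    refine le_min (abs_exp_neg_sub_exp_neg_le_one hu0 hmid)
      ((abs_exp_neg_sub_exp_neg_le_abs_sub hu0 hmid).trans ?_)
    rw [abs_le]
    constructor <;> nlinarith [hu.2]
  calc |∫ u in (0:ℝ)..t, (exp (-(lam * u)) - exp (-(lam * t / 2)))|
      ≤ min 1 (t * lam) * |t - 0| := intervalIntegral.norm_integral_le_of_norm_le_const h_integrand
    _ ≤ (t * lam) ^ κ * t := by
      rw [sub_zero, abs_of_pos ht]
      gcongr
      exact min_one_le_rpow (by positivity) hκ0 hκ1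
    _ = t * (t * lam) ^ κ := mul_comm _ _
end

section
/- For all real numbers $\lambda > 0$, $t > 0$, all $s \in [0,t]$ and all $\kappa \in [0,2]$ it holds that $\left| e^{-\lambda s} - e^{-\lambda t/2}\left(1 - (s - t/2)\lambda\right) \right| \le 2\,(t\lambda)^{\kappa}$. -/
/-!
With `x = t λ` and `u = λ (t/2 - s)`, so that `|u| ≤ x/2`, the error equals
`e^{-x/2} (e^u - 1 - u)`. For `x ≤ 1` the Taylor bound `|e^u - 1 - u| ≤ u² ≤ x²` applies, and
`|e^u - 1 - u| ≤ 2 e^{|u|} ≤ 2 e^{x/2}` gives the bound `2` for every `x`. Hence the error is at most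
`2 min(x², 1)`, which lies below `2 x^κ` for every `κ ∈ [0, 2]`.
-/

open Real

lemma abs_exp_sub_one_sub_le_two_mul_exp_abs (u : ℝ) : |exp u - 1 - u| ≤ 2 * exp |u| := by
  have h_exp : exp u ≤ exp |u| := exp_le_exp.mpr (le_abs_self u)
  have h_lin : |1 + u| ≤ exp |u| :=
    calc |1 + u| ≤ |u| + 1 := by rw [add_comm]; exact (abs_add_le u 1).trans_eq (by simp)
      _ ≤ exp |u| := add_one_le_exp _
  calc |exp u - 1 - u| = |exp u - (1 + u)| := by ring_nf
    _ ≤ |exp u| + |1 + u| := abs_sub _ _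
    _ ≤ 2 * exp |u| := by rw [abs_of_pos (exp_pos u)]; linarith

lemma min_sq_one_le_rpow {x κ : ℝ} (hx : 0 ≤ x) (hκ0 : 0 ≤ κ) (hκ2 : κ ≤ 2) :
    min (x ^ 2) 1 ≤ x ^ κ := by
  rcases le_total x 1 with hx1 | hx1
  · calc min (x ^ 2) 1 ≤ x ^ 2 := min_le_left _ _
      _ = x ^ (2 : ℝ) := (rpow_two x).symm
      _ ≤ x ^ κ := rpow_le_rpow_of_exponent_ge' hx hx1 hκ0 hκ2
  · exact (min_le_right _ _).trans (one_le_rpow hx1 hκ0)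

lemma exp_neg_half_mul_abs_exp_sub_one_sub_le {x u κ : ℝ} (hx : 0 ≤ x) (hu : |u| ≤ x / 2)
    (hκ0 : 0 ≤ κ) (hκ2 : κ ≤ 2) : exp (-(x / 2)) * |exp u - 1 - u| ≤ 2 * x ^ κ := by
  have h_damp : exp (-(x / 2)) ≤ 1 := exp_le_one_iff.mpr (by linarith)
  have h_two : exp (-(x / 2)) * |exp u - 1 - u| ≤ 2 :=
    calc exp (-(x / 2)) * |exp u - 1 - u| ≤ exp (-(x / 2)) * (2 * exp (x / 2)) := by
          gcongr
          exact (abs_exp_sub_one_sub_le_two_mul_exp_abs u).trans (by gcongr)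
      _ = 2 := by rw [mul_left_comm, ← exp_add, neg_add_cancel, exp_zero, mul_one]
  have h_min : exp (-(x / 2)) * |exp u - 1 - u| ≤ 2 * min (x ^ 2) 1 := by
    rcases le_total x 1 with hx1 | hx1
    · have h_sq : u ^ 2 ≤ x ^ 2 := by
        rw [← sq_abs]; exact pow_le_pow_left₀ (abs_nonneg u) (by linarith) 2
      have h_taylor := abs_exp_sub_one_sub_id_le (hu.trans (by linarith))
      have h_nonneg := abs_nonneg (exp u - 1 - u)
      rw [min_eq_left (pow_le_one₀ hx hx1)]
      nlinarith [exp_pos (-(x / 2)), sq_nonneg x]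
    · rwa [min_eq_right (one_le_pow₀ hx1), mul_one]
  exact h_min.trans (by gcongr; exact min_sq_one_le_rpow hx hκ0 hκ2)

theorem stmt_4_general (lam t s κ : ℝ) (hlam : 0 < lam)
    (hs0 : 0 ≤ s) (hst : s ≤ t) (hκ0 : 0 ≤ κ) (hκ2 : κ ≤ 2) :
    |Real.exp (-(lam * s)) - Real.exp (-(lam * t / 2)) * (1 - (s - t / 2) * lam)| ≤
      2 * (t * lam) ^ κ := by
  have h_error : Real.exp (-(lam * s)) - Real.exp (-(lam * t / 2)) * (1 - (s - t / 2) * lam)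
      = exp (-(t * lam / 2)) * (exp (lam * (t / 2 - s)) - 1 - lam * (t / 2 - s)) := by
    have h_split : exp (-(lam * s)) = exp (-(t * lam / 2)) * exp (lam * (t / 2 - s)) := by
      rw [← exp_add]; ring_nf
    rw [h_split]; ring_nf
  have hu : |lam * (t / 2 - s)| ≤ t * lam / 2 := by
    rw [abs_le]; constructor <;> nlinarith
  rw [h_error, abs_mul, abs_of_pos (exp_pos _)]
  exact exp_neg_half_mul_abs_exp_sub_one_sub_le (mul_nonneg (hs0.trans hst) hlam.le) hu hκ0 hκ2

theorem stmt_4 (lam t s κ : ℝ) (hlam : 0 < lam) (ht : 0 < t)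
    (hs0 : 0 ≤ s) (hst : s ≤ t) (hκ0 : 0 ≤ κ) (hκ2 : κ ≤ 2) :
    |Real.exp (-(lam * s)) - Real.exp (-(lam * t / 2)) * (1 - (s - t / 2) * lam)| ≤
      2 * (t * lam) ^ κ :=
  stmt_4_general lam t s κ hlam hs0 hst hκ0 hκ2
end

section
/- Let $b \ge 0$, $\theta \in [0,1)$, $c \ge 0$ be real numbers, let $M \ge 1$ be a natural number, and let $a_0, \dots, a_M \ge 0$ satisfy $a_m \le b + c\,M^{-(1-\theta)} \sum_{l=0}^{m-1} (m-l)^{-\theta} a_l$ for all $m \in \{0, \dots, M\}$. Then there exists a constant $C$ depending only on $c$ and $\theta$ (and not on $M$, $b$, or the sequence $(a_m)$) such that $a_m \le C\,b$ for all $m \in \{0, \dots, M\}$. -/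
/-! Weight the sequence by `exp (κ m / M)`. Comparing the kernel sum with the Gamma integral gives
`M^(-(1-θ)) ∑_{l<m} (m-l)^(-θ) exp (-κ (m-l) / M) ≤ Γ(1-θ) κ^(-(1-θ))` uniformly in `M`,
so for `κ` large the weighted inequality contracts by a factor `1/2` and strong induction yields
`a m ≤ 2 b exp (κ m / M) ≤ 2 exp κ · b`. -/

open Real Finset MeasureTheory Set

/- Unlike `AntitoneOn.sum_range_le_integral`, this asks for monotonicity only on `Ioi 0`, which is
what `x ^ (-θ)` satisfies (its junk value `0 ^ (-θ) = 0` breaks monotonicity on `Icc 0 n`). -/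
theorem AntitoneOn.sum_range_le_integral_Ioi {f : ℝ → ℝ} (anti : AntitoneOn f (Ioi 0))
    (integrable : IntegrableOn f (Ioi 0)) (nonneg : ∀ t ∈ Ioi (0 : ℝ), 0 ≤ f t) (n : ℕ) :
    ∑ i ∈ range n, f (i + 1) ≤ ∫ x in Ioi 0, f x := by
  have hint (i : ℕ) : IntervalIntegrable f volume i (i + 1) :=
    (intervalIntegrable_iff_integrableOn_Ioc_of_le (by linarith)).mpr <|
      integrable.mono_set <| Ioc_subset_Ioi_self.trans <| Ioi_subset_Ioi i.cast_nonneg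
  calc ∑ i ∈ range n, f (i + 1)
    _ = ∑ i ∈ range n, ∫ _ in (i : ℝ)..(i + 1), f (i + 1) := by simp
    _ ≤ ∑ i ∈ range n, ∫ x in (i : ℝ)..(i + 1), f x := by
      gcongr with i
      refine intervalIntegral.integral_mono_on_of_le_Ioo (by linarith) (by simp) (hint i)
        fun x hx => anti ?_ ?_ hx.2.le
      · exact lt_of_le_of_lt i.cast_nonneg hx.1
      · exact mem_Ioi.mpr (by positivity)
    _ = ∫ x in (0 : ℝ)..n, f x := by
      simpa using intervalIntegral.sum_integral_adjacent_intervals (a := fun i : ℕ => (i : ℝ))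
        (fun i _ => by simpa using hint i)
    _ ≤ ∫ x in Ioi 0, f x := by
      rw [intervalIntegral.integral_of_le n.cast_nonneg]
      exact setIntegral_mono_set integrable (ae_restrict_of_forall_mem measurableSet_Ioi nonneg)
        Ioc_subset_Ioi_self.eventuallyLE

theorem sum_range_sub_eq_sum_range_add_one {M : Type*} [AddCommMonoid M] (f : ℝ → M) (n : ℕ) :
    ∑ l ∈ range n, f ((n : ℝ) - l) = ∑ i ∈ range n, f (i + 1) := by
  rw [← sum_range_reflect]
  refine sum_congr rfl fun i hi => congrArg f ?_
  rw [Nat.cast_sub (by grind), Nat.cast_sub (by grind)]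
  push_cast
  ring

theorem sum_rpow_neg_mul_exp_neg_le_Gamma {θ μ : ℝ} (hθ0 : 0 ≤ θ) (hθ1 : θ < 1)
    (hμ : 0 < μ) (n : ℕ) :
    ∑ l ∈ range n, ((n : ℝ) - l) ^ (-θ) * exp (-(μ * ((n : ℝ) - l))) ≤
      (1 / μ) ^ (1 - θ) * Gamma (1 - θ) := by
  set f : ℝ → ℝ := fun x => x ^ (-θ) * exp (-(μ * x))
  have hf : ∫ x in Ioi 0, f x = (1 / μ) ^ (1 - θ) * Gamma (1 - θ) := by
    rw [← integral_rpow_mul_exp_neg_mul_Ioi (by linarith) hμ]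
    simp only [f, sub_sub_cancel_left]
  have anti : AntitoneOn f (Ioi 0) := fun x hx y _ hxy =>
    mul_le_mul (rpow_le_rpow_of_nonpos hx hxy (by linarith))
      (exp_le_exp.mpr (by nlinarith)) (exp_pos _).le (rpow_nonneg (le_of_lt hx) _)
  have integrable : IntegrableOn f (Ioi 0) := Integrable.of_integral_ne_zero <| by
    rw [hf]
    exact (mul_pos (rpow_pos_of_pos (by positivity) _) (Gamma_pos_of_pos (by linarith))).ne'
  rw [← hf, sum_range_sub_eq_sum_range_add_one f]
  exact anti.sum_range_le_integral_Ioi integrable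
    (fun x hx => mul_nonneg (rpow_nonneg (le_of_lt hx) _) (exp_pos _).le) n

theorem le_two_mul_exp_of_le_add_sum {k : ℝ → ℝ} {h b μ : ℝ} {M : ℕ} {a : ℕ → ℝ}
    (hk : ∀ x, 0 < x → 0 ≤ k x) (hh : 0 ≤ h) (hb : 0 ≤ b) (hμ : 0 ≤ μ)
    (hsmall : ∀ m ≤ M, h * ∑ l ∈ range m, k (m - l) * exp (-(μ * (m - l))) ≤ 1 / 2)
    (ha : ∀ m ≤ M, a m ≤ b + h * ∑ l ∈ range m, k (m - l) * a l) :
    ∀ m ≤ M, a m ≤ 2 * b * exp (μ * m) := by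
  intro m
  induction m using Nat.strong_induction_on with
  | _ m ih =>
  intro hm
  set S := ∑ l ∈ range m, k (m - l) * exp (-(μ * (m - l)))
  have hsum : ∑ l ∈ range m, k (m - l) * a l ≤ 2 * b * exp (μ * m) * S := by
    rw [mul_sum]
    refine sum_le_sum fun l hl => ?_
    have hlm : l < m := mem_range.mp hl
    calc k (m - l) * a l ≤ k (m - l) * (2 * b * exp (μ * l)) :=
          mul_le_mul_of_nonneg_left (ih l hlm (by omega)) (hk _ (by simpa using hlm))
      _ = 2 * b * exp (μ * m) * (k (m - l) * exp (-(μ * (m - l)))) := by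
          rw [show μ * l = μ * m + -(μ * (m - l)) by ring, exp_add]
          ring
  have hexp : 1 ≤ exp (μ * m) := one_le_exp (by positivity)
  calc a m ≤ b + h * (2 * b * exp (μ * m) * S) := by
        linarith [ha m hm, mul_le_mul_of_nonneg_left hsum hh]
    _ = b + 2 * b * exp (μ * m) * (h * S) := by ring
    _ ≤ b + 2 * b * exp (μ * m) * (1 / 2) := by gcongr; exact hsmall m hm
    _ ≤ 2 * b * exp (μ * m) := by nlinarith

theorem rpow_neg_mul_sum_rpow_neg_mul_exp_neg_le_Gamma {θ M κ : ℝ} (hθ0 : 0 ≤ θ)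
    (hθ1 : θ < 1) (hM : 0 < M) (hκ : 0 < κ) (m : ℕ) :
    M ^ (-(1 - θ)) *
        ∑ l ∈ range m, ((m : ℝ) - l) ^ (-θ) * exp (-(κ / M * ((m : ℝ) - l))) ≤
      (1 / κ) ^ (1 - θ) * Gamma (1 - θ) := by
  have hGamma := sum_rpow_neg_mul_exp_neg_le_Gamma hθ0 hθ1 (div_pos hκ hM) m
  calc _ ≤ M ^ (-(1 - θ)) * ((1 / (κ / M)) ^ (1 - θ) * Gamma (1 - θ)) :=
        mul_le_mul_of_nonneg_left hGamma (rpow_nonneg hM.le _)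
    _ = (1 / κ) ^ (1 - θ) * Gamma (1 - θ) := by
        rw [one_div_div, div_rpow hM.le hκ.le, rpow_neg hM.le, one_div, inv_rpow hκ.le]
        field_simp

theorem stmt_19 (θ c : ℝ) (hθ0 : 0 ≤ θ) (hθ1 : θ < 1) (hc : 0 ≤ c) :
    ∃ C : ℝ, ∀ (b : ℝ), 0 ≤ b → ∀ (M : ℕ), 1 ≤ M → ∀ a : ℕ → ℝ,
      (∀ m ≤ M, 0 ≤ a m) →
      (∀ m ≤ M, a m ≤ b + c * (M : ℝ) ^ (-(1 - θ)) *
        ∑ l ∈ Finset.range m, ((m : ℝ) - l) ^ (-θ) * a l) →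
      ∀ m ≤ M, a m ≤ C * b := by
  set G := Gamma (1 - θ)
  have hG : 0 < G := Gamma_pos_of_pos (by linarith)
  -- `κ ^ (1 - θ) = 2 c Γ(1-θ) + 1` makes `c Γ(1-θ) κ^(-(1-θ)) ≤ 1/2`.
  set κ := (2 * c * G + 1) ^ (1 - θ)⁻¹
  have hκ : 0 < κ := rpow_pos_of_pos (by positivity) _
  have hκθ : (1 / κ) ^ (1 - θ) = (2 * c * G + 1)⁻¹ := by
    rw [one_div, inv_rpow hκ.le, rpow_inv_rpow (by positivity) (by linarith)]
  refine ⟨2 * exp κ, fun b hb M hM a _ ha m hm => ?_⟩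
  have hM0 : (0 : ℝ) < M := by exact_mod_cast hM
  have hsmall : ∀ m ≤ M, c * (M : ℝ) ^ (-(1 - θ)) *
      ∑ l ∈ range m, ((m : ℝ) - l) ^ (-θ) * exp (-(κ / M * ((m : ℝ) - l))) ≤ 1 / 2 := by
    intro m _
    rw [mul_assoc]
    calc _ ≤ c * ((1 / κ) ^ (1 - θ) * G) := mul_le_mul_of_nonneg_left
          (rpow_neg_mul_sum_rpow_neg_mul_exp_neg_le_Gamma hθ0 hθ1 hM0 hκ m) hc
      _ ≤ 1 / 2 := by
          rw [hκθ, ← div_eq_inv_mul, ← mul_div_assoc, div_le_iff₀ (by positivity)]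
          linarith
  have hgrowth := le_two_mul_exp_of_le_add_sum (k := fun x => x ^ (-θ))
    (fun x hx => rpow_nonneg hx.le _) (mul_nonneg hc (rpow_nonneg hM0.le _)) hb
    (div_pos hκ hM0).le hsmall ha m hm
  calc a m ≤ 2 * b * exp (κ / M * m) := hgrowth
    _ ≤ 2 * b * exp κ := by
        gcongr
        rw [div_mul_eq_mul_div, div_le_iff₀ hM0]
        gcongr
    _ = 2 * exp κ * b := by ring
end
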